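/- Under the standing assumption, there exists a unique a* ∈ (0,∞) such that v(a*) = π − (1+θ)·∫_{(0,∞)} z dμ_F̂(z). -/

import Mathlib

/-!
For `a > 0`, `v(a)` is an infimum of functions that are affine in `a`, hence concave and so
continuous on `(0, ∞)`. Truncating the identity at a high level shows that `v(a)` falls below
the target level `t = π - (1+θ) E_F̂[Z] < 0` for small `a`.

The key estimate is that an admissible `H` with `∫ H dμ_F̂ ≥ β > 0` has `∫ H² dμ_F ≥ c` for a
constant `c > 0` independent of `H`: since `g 0 = 0`, `μ_F̂` charges no half-line `(w, ∞)` that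
`μ_F` does not, and a nondecreasing 1-Lipschitz `H` with large `μ_F̂`-mean is bounded below on
such a half-line of positive `μ_F`-mass. Splitting according to whether `∫ H dμ_F̂ ≥ β`, with `β`
chosen so that `-(1+θ) β = t / 2`, gives `v q ≥ min (v p + (q - p) c / 2) (t / 2)` for `p ≤ q`.
Hence `v` eventually exceeds `t`, the intermediate value theorem yields a solution, and two
solutions `p < q` would give `t ≥ t + (q - p) c / 2`.
-/

open MeasureTheory Set Filter Topology
open scoped ENNReal

noncomputable section

/-- The admissible set 𝒜: functions `H : [0,∞) → [0,∞)` with `H 0 = 0` that are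
nondecreasing and 1-Lipschitz (extended to `ℝ`, with the conditions imposed on `[0,∞)`). -/
def Adm : Set (ℝ → ℝ) :=
  {H | H 0 = 0 ∧ (∀ z, 0 ≤ z → 0 ≤ H z) ∧ MonotoneOn H (Set.Ici 0) ∧
    LipschitzOnWith 1 H (Set.Ici 0)}

/-- The objective functional
`J_a(H) = ∫_{(0,∞)} ((a/2)·H² + H) dμ_F − (1+θ)·∫_{(0,∞)} H dμ_F̂`, valued in `EReal`. -/
def Jfun (μF μFhat : Measure ℝ) (θ a : ℝ) (H : ℝ → ℝ) : EReal :=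
  ((∫⁻ z in Set.Ioi (0:ℝ), ENNReal.ofReal (a / 2 * H z ^ 2 + H z) ∂μF : ℝ≥0∞) : EReal)
    - ((ENNReal.ofReal (1 + θ) * ∫⁻ z in Set.Ioi (0:ℝ), ENNReal.ofReal (H z) ∂μFhat : ℝ≥0∞) : EReal)

/-- `v(a) = inf_{H ∈ 𝒜} J_a(H)`. -/
def vfun (μF μFhat : Measure ℝ) (θ : ℝ) (a : ℝ) : EReal :=
  ⨅ H ∈ Adm, Jfun μF μFhat θ a H

def firstMoment (μ : Measure ℝ) : ℝ≥0∞ :=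
  ∫⁻ z in Ioi (0:ℝ), ENNReal.ofReal z ∂μ

def sqMass (μ : Measure ℝ) (H : ℝ → ℝ) : ℝ≥0∞ :=
  ∫⁻ z in Ioi (0:ℝ), ENNReal.ofReal (H z ^ 2) ∂μ

namespace Adm

variable {H : ℝ → ℝ} {y z : ℝ}

lemma nonneg (hH : H ∈ Adm) (hz : 0 ≤ z) : 0 ≤ H z :=
  hH.2.1 z hz

lemma mono (hH : H ∈ Adm) (hy : 0 ≤ y) (hyz : y ≤ z) : H y ≤ H z :=
  hH.2.2.1 hy (hy.trans hyz) hyz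

lemma sub_le (hH : H ∈ Adm) (hy : 0 ≤ y) (hyz : y ≤ z) : H z - H y ≤ z - y := by
  have h := hH.2.2.2.dist_le_mul z (hy.trans hyz) y hy
  rw [NNReal.coe_one, one_mul, Real.dist_eq, Real.dist_eq, abs_of_nonneg (sub_nonneg.2 hyz)] at h
  exact (le_abs_self _).trans h

lemma le_self (hH : H ∈ Adm) (hz : 0 ≤ z) : H z ≤ z := by
  simpa [hH.1] using sub_le hH le_rfl hz

lemma aemeasurable (hH : H ∈ Adm) (μ : Measure ℝ) :
    AEMeasurable H (μ.restrict (Ioi 0)) :=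
  (hH.2.2.2.continuousOn.mono Ioi_subset_Ici_self).aemeasurable measurableSet_Ioi

lemma lintegral_le (hH : H ∈ Adm) (μ : Measure ℝ) :
    ∫⁻ z in Ioi (0:ℝ), ENNReal.ofReal (H z) ∂μ ≤ firstMoment μ :=
  setLIntegral_mono' measurableSet_Ioi fun _ hz => ENNReal.ofReal_le_ofReal (le_self hH hz.le)

lemma lintegral_le_add_tail (hH : H ∈ Adm) (ν : Measure ℝ)
    [IsProbabilityMeasure ν] {s : ℝ} (hs : 0 < s) :
    ∫⁻ z in Ioi (0:ℝ), ENNReal.ofReal (H z) ∂ν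
      ≤ ENNReal.ofReal (H s) + ∫⁻ z in Ioi s, ENNReal.ofReal z ∂ν := by
  rw [← Ioc_union_Ioi_eq_Ioi hs.le, lintegral_union measurableSet_Ioi (Ioc_disjoint_Ioi le_rfl)]
  gcongr ?_ + ?_
  · calc ∫⁻ z in Ioc 0 s, ENNReal.ofReal (H z) ∂ν
        ≤ ∫⁻ _ in Ioc 0 s, ENNReal.ofReal (H s) ∂ν :=
          setLIntegral_mono' measurableSet_Ioc fun z hz =>
            ENNReal.ofReal_le_ofReal (mono hH hz.1.le hz.2)
      _ = ENNReal.ofReal (H s) * ν (Ioc 0 s) := setLIntegral_const _ _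
      _ ≤ ENNReal.ofReal (H s) := mul_le_of_le_one_right' prob_le_one
  · exact setLIntegral_mono' measurableSet_Ioi fun z hz =>
      ENNReal.ofReal_le_ofReal (le_self hH (hs.trans hz).le)

end Adm

lemma zero_mem_Adm : (fun _ : ℝ => (0:ℝ)) ∈ Adm :=
  ⟨rfl, fun _ _ => le_rfl, monotoneOn_const, (LipschitzWith.const' 0).lipschitzOnWith⟩

lemma min_mem_Adm {m : ℝ} (hm : 0 ≤ m) : (fun z : ℝ => min z m) ∈ Adm :=
  ⟨min_eq_left hm, fun _ hz => le_min hz hm, fun _ _ _ _ hxy => min_le_min_right m hxy,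
    (LipschitzWith.id.min_const m).lipschitzOnWith⟩

lemma tendsto_setLIntegral_Ioi_atTop (ν : Measure ℝ) [SFinite ν] {f : ℝ → ℝ≥0∞}
    (hf : ∫⁻ z in Ioi (0:ℝ), f z ∂ν ≠ ⊤) :
    Tendsto (fun T => ∫⁻ z in Ioi T, f z ∂ν) atTop (𝓝 0) := by
  have h := tendsto_measure_iInter_atTop (μ := ν.withDensity f) (s := Ioi)
    (fun _ => measurableSet_Ioi.nullMeasurableSet) (fun _ _ hab => Ioi_subset_Ioi hab)
    ⟨0, by rwa [withDensity_apply' _]⟩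
  have hempty : ⋂ T : ℝ, Ioi T = ∅ :=
    eq_empty_of_forall_notMem fun z hz => lt_irrefl z (mem_iInter.1 hz z)
  simpa [Function.comp_def, withDensity_apply' _, hempty] using h

lemma exists_measure_Ioi_ne_zero_and_tail_le (ν : Measure ℝ) [SFinite ν] (hν0 : ν (Ioi 0) ≠ 0)
    (hν : firstMoment ν ≠ ⊤) {ε : ℝ≥0∞} (hε : 0 < ε) :
    ∃ s > 0, (∀ w < s, ν (Ioi w) ≠ 0) ∧ ∫⁻ z in Ioi s, ENNReal.ofReal z ∂ν ≤ ε := by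
  obtain ⟨T, hTε, hT⟩ := (((tendsto_setLIntegral_Ioi_atTop ν hν).eventually
    (ge_mem_nhds hε)).and (eventually_gt_atTop 0)).exists
  by_cases hνT : ν (Ioi T) = 0
  swap
  · exact ⟨T, hT, fun w hw h0 => hνT (measure_mono_null (Ioi_subset_Ioi hw.le) h0), hTε⟩
  -- otherwise `sInf S` is the right end of the support of `ν`
  set S := {z : ℝ | ν (Ioi z) = 0}
  have hS_nonneg : ∀ z ∈ S, 0 ≤ z := fun z hz => not_lt.1 fun hz0 =>
    hν0 (measure_mono_null (Ioi_subset_Ioi hz0.le) hz)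
  have hbdd : BddBelow S := ⟨0, hS_nonneg⟩
  obtain ⟨u, -, hu, huS⟩ := exists_seq_tendsto_sInf ⟨T, hνT⟩ hbdd
  have hb : ν (Ioi (sInf S)) = 0 := by
    refine measure_mono_null (fun y hy => mem_iUnion.2 ?_) (measure_iUnion_null huS)
    exact (hu.eventually (gt_mem_nhds hy)).exists
  have hb_pos : 0 < sInf S := lt_of_le_of_ne (le_csInf ⟨T, hνT⟩ hS_nonneg)
    fun h => hν0 (h ▸ hb)
  refine ⟨sInf S, hb_pos, fun w hw hw0 => notMem_of_lt_csInf (s := S) hw hbdd hw0, ?_⟩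
  rw [setLIntegral_measure_zero _ _ hb]
  exact zero_le

lemma exists_ofReal_le_sqMass (μ ν : Measure ℝ) [IsFiniteMeasure μ] [IsProbabilityMeasure ν]
    (hsupp : ∀ w, 0 ≤ w → μ (Ioi w) = 0 → ν (Ioi w) = 0) (hν0 : ν (Ioi 0) ≠ 0)
    (hν : firstMoment ν ≠ ⊤) {β : ℝ} (hβ : 0 < β) :
    ∃ c > 0, ∀ H ∈ Adm, ENNReal.ofReal β ≤ ∫⁻ z in Ioi (0:ℝ), ENNReal.ofReal (H z) ∂ν →
      ENNReal.ofReal c ≤ sqMass μ H := by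
  obtain ⟨s, hs, hνs, htail⟩ := exists_measure_Ioi_ne_zero_and_tail_le ν hν0 hν
    (ENNReal.ofReal_pos.2 (by positivity : 0 < β / 4))
  set w := max (s - β / 4) 0
  have hw0 : 0 ≤ w := le_max_right _ _
  have hws : w < s := max_lt (by linarith) hs
  have hμw : μ (Ioi w) ≠ 0 := fun h => hνs w hws (hsupp w hw0 h)
  refine ⟨(β / 2) ^ 2 * (μ (Ioi w)).toReal,
    mul_pos (by positivity) (ENNReal.toReal_pos hμw (measure_ne_top _ _)), fun H hH hD => ?_⟩
  have hHs : 3 * β / 4 ≤ H s := by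
    have h := hD.trans ((Adm.lintegral_le_add_tail hH ν hs).trans (add_le_add_right htail _))
    rw [← ENNReal.ofReal_add (Adm.nonneg hH hs.le) (by positivity),
      ENNReal.ofReal_le_ofReal_iff (by linarith [Adm.nonneg hH hs.le])] at h
    linarith
  have hHw : ∀ z ∈ Ioi w, β / 2 ≤ H z := by
    intro z hz
    rcases le_total s z with hsz | hzs
    · linarith [Adm.mono hH hs.le hsz]
    · linarith [Adm.sub_le hH (hw0.trans (le_of_lt hz)) hzs, le_max_left (s - β / 4) 0,
        mem_Ioi.1 hz]
  calc ENNReal.ofReal ((β / 2) ^ 2 * (μ (Ioi w)).toReal)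
      = ENNReal.ofReal ((β / 2) ^ 2) * μ (Ioi w) := by
        rw [ENNReal.ofReal_mul (by positivity), ENNReal.ofReal_toReal (measure_ne_top _ _)]
    _ = ∫⁻ _ in Ioi w, ENNReal.ofReal ((β / 2) ^ 2) ∂μ := (setLIntegral_const _ _).symm
    _ ≤ ∫⁻ z in Ioi w, ENNReal.ofReal (H z ^ 2) ∂μ :=
        setLIntegral_mono' measurableSet_Ioi fun z hz =>
          ENNReal.ofReal_le_ofReal (pow_le_pow_left₀ (by positivity) (hHw z hz) 2)
    _ ≤ sqMass μ H := lintegral_mono_set (Ioi_subset_Ioi hw0)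

def Jreal (μ ν : Measure ℝ) (θ a : ℝ) (H : ℝ → ℝ) : ℝ :=
  a / 2 * (sqMass μ H).toReal + (∫⁻ z in Ioi (0:ℝ), ENNReal.ofReal (H z) ∂μ).toReal
    - (1 + θ) * (∫⁻ z in Ioi (0:ℝ), ENNReal.ofReal (H z) ∂ν).toReal

-- agrees with `vfun` for `a > 0`, where `vfun` is finite (`vfun_eq_coe_vreal`)
def vreal (μ ν : Measure ℝ) (θ a : ℝ) : ℝ :=
  (vfun μ ν θ a).toReal

section Functional

variable {μ ν : Measure ℝ} {θ a : ℝ} {H : ℝ → ℝ}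

lemma lintegral_quadratic_eq (hH : H ∈ Adm) (ha : 0 ≤ a) :
    ∫⁻ z in Ioi (0:ℝ), ENNReal.ofReal (a / 2 * H z ^ 2 + H z) ∂μ
      = ENNReal.ofReal (a / 2) * sqMass μ H + ∫⁻ z in Ioi (0:ℝ), ENNReal.ofReal (H z) ∂μ := by
  rw [sqMass, ← lintegral_const_mul' _ _ ENNReal.ofReal_ne_top,
    ← lintegral_add_left' ((((Adm.aemeasurable hH μ).pow_const 2).ennreal_ofReal).const_mul _)]
  refine setLIntegral_congr_fun measurableSet_Ioi fun z hz => ?_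
  rw [ENNReal.ofReal_add (by positivity) (Adm.nonneg hH (le_of_lt hz)),
    ENNReal.ofReal_mul (by positivity)]

lemma Jfun_eq_coe_Jreal (hμ : firstMoment μ ≠ ⊤) (hν : firstMoment ν ≠ ⊤) (hθ : 0 ≤ 1 + θ)
    (ha : 0 ≤ a) (hH : H ∈ Adm) (hS : sqMass μ H ≠ ⊤) : Jfun μ ν θ a H = Jreal μ ν θ a H := by
  have hL := ne_top_of_le_ne_top hμ (Adm.lintegral_le hH μ)
  have hD := ne_top_of_le_ne_top hν (Adm.lintegral_le hH ν)
  rw [Jfun, lintegral_quadratic_eq hH ha,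
    ← EReal.coe_ennreal_toReal (by finiteness), ← EReal.coe_ennreal_toReal (by finiteness),
    ← EReal.coe_sub, ENNReal.toReal_add (by finiteness) hL, ENNReal.toReal_mul,
    ENNReal.toReal_mul, ENNReal.toReal_ofReal (by positivity), ENNReal.toReal_ofReal hθ, Jreal]

lemma Jfun_eq_top (hν : firstMoment ν ≠ ⊤) (ha : 0 < a) (hH : H ∈ Adm) (hS : sqMass μ H = ⊤) : Jfun μ ν θ a H = ⊤ := by
  have hD := ne_top_of_le_ne_top hν (Adm.lintegral_le hH ν)
  rw [Jfun, lintegral_quadratic_eq hH ha.le, hS, ENNReal.mul_top (by simpa using ha),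
    top_add, EReal.coe_ennreal_top]
  exact EReal.top_sub (EReal.coe_ennreal_eq_top_iff.not.2 (by finiteness))

lemma neg_le_Jreal (ha : 0 ≤ a) :
    -((1 + θ) * (∫⁻ z in Ioi (0:ℝ), ENNReal.ofReal (H z) ∂ν).toReal) ≤ Jreal μ ν θ a H := by
  have : 0 ≤ a / 2 * (sqMass μ H).toReal := by positivity
  unfold Jreal
  linarith [ENNReal.toReal_nonneg (a := ∫⁻ z in Ioi (0:ℝ), ENNReal.ofReal (H z) ∂μ)]

lemma coe_le_vfun_iff (hμ : firstMoment μ ≠ ⊤) (hν : firstMoment ν ≠ ⊤) (hθ : 0 ≤ 1 + θ)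
    (ha : 0 < a) {x : ℝ} :
    (x : EReal) ≤ vfun μ ν θ a ↔ ∀ H ∈ Adm, sqMass μ H ≠ ⊤ → x ≤ Jreal μ ν θ a H := by
  refine le_iInf₂_iff.trans (forall₂_congr fun H hH => ?_)
  by_cases hS : sqMass μ H = ⊤
  · simp [hS, Jfun_eq_top hν ha hH hS]
  · simp [hS, Jfun_eq_coe_Jreal hμ hν hθ ha.le hH hS]

lemma vfun_eq_coe_vreal (hμ : firstMoment μ ≠ ⊤) (hν : firstMoment ν ≠ ⊤) (hθ : 0 ≤ 1 + θ)
    (ha : 0 < a) : vfun μ ν θ a = vreal μ ν θ a := by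
  have hle : vfun μ ν θ a ≤ (0 : ℝ) := by
    have h0 : sqMass μ (fun _ => 0) ≠ ⊤ := by simp [sqMass]
    refine (iInf₂_le _ zero_mem_Adm).trans_eq ?_
    rw [Jfun_eq_coe_Jreal hμ hν hθ ha.le zero_mem_Adm h0]
    simp [Jreal, sqMass]
  have hge : (-((1 + θ) * (firstMoment ν).toReal) : ℝ) ≤ vfun μ ν θ a :=
    (coe_le_vfun_iff hμ hν hθ ha).2 fun H hH _ => le_trans (neg_le_neg
      (mul_le_mul_of_nonneg_left (ENNReal.toReal_mono hν (Adm.lintegral_le hH ν)) hθ))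
      (neg_le_Jreal ha.le)
  exact (EReal.coe_toReal (ne_top_of_le_ne_top (EReal.coe_ne_top _) hle)
    (ne_bot_of_le_ne_bot (EReal.coe_ne_bot _) hge)).symm

lemma le_vreal_iff (hμ : firstMoment μ ≠ ⊤) (hν : firstMoment ν ≠ ⊤) (hθ : 0 ≤ 1 + θ)
    (ha : 0 < a) {x : ℝ} :
    x ≤ vreal μ ν θ a ↔ ∀ H ∈ Adm, sqMass μ H ≠ ⊤ → x ≤ Jreal μ ν θ a H := by
  rw [← coe_le_vfun_iff hμ hν hθ ha, vfun_eq_coe_vreal hμ hν hθ ha, EReal.coe_le_coe_iff]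

lemma vreal_le_Jreal (hμ : firstMoment μ ≠ ⊤) (hν : firstMoment ν ≠ ⊤) (hθ : 0 ≤ 1 + θ)
    (ha : 0 < a) (hH : H ∈ Adm) (hS : sqMass μ H ≠ ⊤) : vreal μ ν θ a ≤ Jreal μ ν θ a H :=
  (le_vreal_iff hμ hν hθ ha).1 le_rfl H hH hS

lemma concaveOn_vreal (hμ : firstMoment μ ≠ ⊤) (hν : firstMoment ν ≠ ⊤) (hθ : 0 ≤ 1 + θ) :
    ConcaveOn ℝ (Ioi 0) (vreal μ ν θ) := by
  refine ⟨convex_Ioi 0, fun a ha b hb s t hs ht hst => ?_⟩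
  rw [le_vreal_iff hμ hν hθ (convex_Ioi 0 ha hb hs ht hst)]
  intro H hH hS
  calc s • vreal μ ν θ a + t • vreal μ ν θ b ≤ s • Jreal μ ν θ a H + t • Jreal μ ν θ b H := by
        gcongr <;> exact vreal_le_Jreal hμ hν hθ ‹_› hH hS
    _ = Jreal μ ν θ (s • a + t • b) H := by
        simp only [Jreal, smul_eq_mul]
        linear_combination (((∫⁻ z in Ioi (0:ℝ), ENNReal.ofReal (H z) ∂μ).toReal
          - (1 + θ) * (∫⁻ z in Ioi (0:ℝ), ENNReal.ofReal (H z) ∂ν).toReal)) * hst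

lemma sqMass_min_ne_top (μ : Measure ℝ) [IsFiniteMeasure μ] {m : ℝ} (hm : 0 ≤ m) :
    sqMass μ (fun z => min z m) ≠ ⊤ := by
  refine ne_top_of_le_ne_top (ENNReal.mul_ne_top ENNReal.ofReal_ne_top (measure_ne_top μ (Ioi 0)))
    ((setLIntegral_mono' measurableSet_Ioi fun z hz => ?_).trans_eq
      (setLIntegral_const (Ioi 0) (ENNReal.ofReal (m ^ 2))))
  exact ENNReal.ofReal_le_ofReal
    (pow_le_pow_left₀ (le_min (le_of_lt hz) hm) (min_le_right _ _) 2)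

lemma firstMoment_le_lintegral_min_add (ν : Measure ℝ) {m : ℝ} (hm : 0 ≤ m) :
    firstMoment ν ≤ ∫⁻ z in Ioi (0:ℝ), ENNReal.ofReal (min z m) ∂ν
      + ∫⁻ z in Ioi m, ENNReal.ofReal z ∂ν := by
  rw [firstMoment, ← Ioc_union_Ioi_eq_Ioi hm,
    lintegral_union measurableSet_Ioi (Ioc_disjoint_Ioi le_rfl), Ioc_union_Ioi_eq_Ioi hm]
  gcongr ?_ + _
  calc ∫⁻ z in Ioc 0 m, ENNReal.ofReal z ∂ν = ∫⁻ z in Ioc 0 m, ENNReal.ofReal (min z m) ∂ν :=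
        setLIntegral_congr_fun measurableSet_Ioc fun z hz => by rw [min_eq_left hz.2]
    _ ≤ _ := lintegral_mono_set Ioc_subset_Ioi_self

lemma exists_Jreal_zero_lt (hμ : firstMoment μ ≠ ⊤) (hν : firstMoment ν ≠ ⊤) (hθ : 0 < 1 + θ)
    [IsFiniteMeasure μ] [SFinite ν] {ε : ℝ} (hε : 0 < ε) :
    ∃ H ∈ Adm, sqMass μ H ≠ ⊤ ∧
      Jreal μ ν θ 0 H < (firstMoment μ).toReal - (1 + θ) * (firstMoment ν).toReal + ε := by
  have hδ : 0 < ε / (2 * (1 + θ)) := by positivity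
  obtain ⟨m, htail, hm⟩ := (((tendsto_setLIntegral_Ioi_atTop ν hν).eventually
    (ge_mem_nhds (ENNReal.ofReal_pos.2 hδ))).and (eventually_gt_atTop 0)).exists
  have hH := min_mem_Adm hm.le
  refine ⟨_, hH, sqMass_min_ne_top μ hm.le, ?_⟩
  have hDfin := ne_top_of_le_ne_top hν (Adm.lintegral_le hH ν)
  have hD : (firstMoment ν).toReal
      ≤ (∫⁻ z in Ioi (0:ℝ), ENNReal.ofReal (min z m) ∂ν).toReal + ε / (2 * (1 + θ)) := by
    have h := ENNReal.toReal_mono (by finiteness)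
      ((firstMoment_le_lintegral_min_add ν hm.le).trans (add_le_add_right htail _))
    rwa [ENNReal.toReal_add hDfin ENNReal.ofReal_ne_top, ENNReal.toReal_ofReal hδ.le] at h
  have hθD := mul_le_mul_of_nonneg_left hD hθ.le
  have hε2 : (1 + θ) * (ε / (2 * (1 + θ))) = ε / 2 := by field_simp
  simp only [Jreal, zero_div, zero_mul, zero_add]
  linarith [ENNReal.toReal_mono hμ (Adm.lintegral_le hH μ)]

lemma exists_vreal_lt_Jreal_zero_add (hμ : firstMoment μ ≠ ⊤) (hν : firstMoment ν ≠ ⊤)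
    (hθ : 0 ≤ 1 + θ) (hH : H ∈ Adm) (hS : sqMass μ H ≠ ⊤) {ε : ℝ} (hε : 0 < ε) :
    ∃ a > 0, vreal μ ν θ a < Jreal μ ν θ 0 H + ε := by
  set s := (sqMass μ H).toReal
  have hs : 0 ≤ s := ENNReal.toReal_nonneg
  refine ⟨ε / (s + 1), by positivity, (vreal_le_Jreal hμ hν hθ (by positivity) hH hS).trans_lt ?_⟩
  have h : ε / (s + 1) * s < ε := by
    rw [div_mul_eq_mul_div, div_lt_iff₀ (by positivity)]
    nlinarith
  simp only [Jreal, zero_div, zero_mul, zero_add]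
  linarith [mul_nonneg (div_nonneg hε.le (by positivity : (0:ℝ) ≤ s + 1)) hs]

lemma exists_vreal_lt (hμ : firstMoment μ ≠ ⊤) (hν : firstMoment ν ≠ ⊤) (hθ : 0 < 1 + θ)
    [IsFiniteMeasure μ] [SFinite ν] {ε : ℝ} (hε : 0 < ε) :
    ∃ a > 0, vreal μ ν θ a < (firstMoment μ).toReal - (1 + θ) * (firstMoment ν).toReal + ε := by
  obtain ⟨H, hH, hS, hJ⟩ := exists_Jreal_zero_lt hμ hν hθ (half_pos hε)
  obtain ⟨a, ha, hva⟩ := exists_vreal_lt_Jreal_zero_add hμ hν hθ.le hH hS (half_pos hε)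
  exact ⟨a, ha, by linarith⟩

lemma min_le_vreal (hμ : firstMoment μ ≠ ⊤) (hν : firstMoment ν ≠ ⊤) (hθ : 0 ≤ 1 + θ)
    {β c : ℝ} (hc : ∀ H ∈ Adm, ENNReal.ofReal β ≤ ∫⁻ z in Ioi (0:ℝ), ENNReal.ofReal (H z) ∂ν →
      ENNReal.ofReal c ≤ sqMass μ H)
    {p q : ℝ} (hp : 0 < p) (hpq : p ≤ q) :
    min (vreal μ ν θ p + (q - p) * (c / 2)) (-((1 + θ) * β)) ≤ vreal μ ν θ q := by
  rw [le_vreal_iff hμ hν hθ (hp.trans_le hpq)]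
  intro H hH hS
  have hpq_split : Jreal μ ν θ q H = Jreal μ ν θ p H + (q - p) * ((sqMass μ H).toReal / 2) := by
    simp only [Jreal]
    ring
  by_cases hD : ENNReal.ofReal β ≤ ∫⁻ z in Ioi (0:ℝ), ENNReal.ofReal (H z) ∂ν
  · have hcS := (ENNReal.ofReal_le_iff_le_toReal hS).1 (hc H hH hD)
    refine (min_le_left _ _).trans ?_
    rw [hpq_split]
    gcongr
    exact vreal_le_Jreal hμ hν hθ hp hH hS
  · refine (min_le_right _ _).trans ((neg_le_neg ?_).trans (neg_le_Jreal (hp.trans_le hpq).le))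
    exact mul_le_mul_of_nonneg_left (ENNReal.toReal_lt_of_lt_ofReal (not_le.1 hD)).le hθ

end Functional

lemma existsUnique_eq_of_min_le {f : ℝ → ℝ} {t t' c : ℝ} (htt' : t < t') (hc : 0 < c)
    (hf : ContinuousOn f (Ioi 0)) (hsmall : ∃ a > 0, f a < t)
    (hgrowth : ∀ p q, 0 < p → p ≤ q → min (f p + (q - p) * c) t' ≤ f q) :
    ∃! a, a ∈ Ioi 0 ∧ f a = t := by
  obtain ⟨a₀, ha₀, hfa₀⟩ := hsmall
  set a₁ := a₀ + (t - f a₀) / c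
  have h01 : a₀ ≤ a₁ := le_add_of_nonneg_right (div_nonneg (by linarith) hc.le)
  have hfa₁ : t ≤ f a₁ := by
    have h := hgrowth a₀ a₁ ha₀ h01
    rwa [add_sub_cancel_left, div_mul_cancel₀ _ hc.ne', add_sub_cancel, min_eq_left htt'.le] at h
  obtain ⟨a, ⟨haa₀, -⟩, hfa⟩ := intermediate_value_Icc h01
    (hf.mono fun x hx => ha₀.trans_le hx.1) ⟨hfa₀.le, hfa₁⟩
  have hle : ∀ p q, 0 < p → f p = t → f q = t → q ≤ p := by
    intro p q hp hfp hfq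
    by_contra! hpq
    have h := hgrowth p q hp hpq.le
    rw [hfp, hfq] at h
    exact h.not_gt (lt_min (by nlinarith) htt')
  exact ⟨a, ⟨ha₀.trans_le haa₀, hfa⟩, fun b ⟨hb, hfb⟩ =>
    le_antisymm (hle a b (ha₀.trans_le haa₀) hfa hfb) (hle b a hb hfb hfa)⟩

lemma existsUnique_vreal_eq {μ ν : Measure ℝ} {θ π : ℝ} [IsFiniteMeasure μ]
    [IsProbabilityMeasure ν] (hsupp : ∀ w, 0 ≤ w → μ (Ioi w) = 0 → ν (Ioi w) = 0)
    (hμ : firstMoment μ ≠ ⊤) (hν : firstMoment ν ≠ ⊤) (hθ : 0 < 1 + θ)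
    (hμπ : (firstMoment μ).toReal < π) (hπν : π < (1 + θ) * (firstMoment ν).toReal) :
    ∃! a, a ∈ Ioi 0 ∧ vreal μ ν θ a = π - (1 + θ) * (firstMoment ν).toReal := by
  set E := (firstMoment ν).toReal
  have hν0 : ν (Ioi 0) ≠ 0 := fun h => by
    have hE : E = 0 := by simp [E, firstMoment, setLIntegral_measure_zero _ _ h]
    nlinarith [ENNReal.toReal_nonneg (a := firstMoment μ)]
  -- `-(1 + θ) β` is half the target level `π - (1 + θ) E < 0`
  set β := ((1 + θ) * E - π) / (2 * (1 + θ))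
  have hβ : 0 < β := div_pos (by linarith) (by positivity)
  have hlevel : π - (1 + θ) * E < -((1 + θ) * β) := by
    have : (1 + θ) * β = ((1 + θ) * E - π) / 2 := by
      simp only [β]
      field_simp
    linarith
  obtain ⟨c, hc, hcS⟩ := exists_ofReal_le_sqMass μ ν hsupp hν0 hν hβ
  have hsmall : ∃ a > 0, vreal μ ν θ a < π - (1 + θ) * E := by
    obtain ⟨a, ha, h⟩ := exists_vreal_lt hμ hν hθ (sub_pos.2 hμπ)
    exact ⟨a, ha, h.trans_eq (by ring)⟩
  exact existsUnique_eq_of_min_le hlevel (half_pos hc)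
    ((concaveOn_vreal hμ hν hθ.le).continuousOn isOpen_Ioi) hsmall
    fun p q hp hpq => min_le_vreal hμ hν hθ.le hcS hp hpq

lemma StieltjesFunction.isProbabilityMeasure_of_eq_zero (G : StieltjesFunction ℝ)
    (hG_neg : ∀ z < 0, G z = 0) (hG_top : Tendsto (fun z => G z) atTop (𝓝 1)) :
    IsProbabilityMeasure G.measure :=
  G.isProbabilityMeasure (tendsto_const_nhds.congr'
    (eventually_lt_atBot 0 |>.mono fun z hz => (hG_neg z hz).symm)) hG_top

lemma StieltjesFunction.measure_Ioi_eq_zero_of_dual (F Fhat : StieltjesFunction ℝ) (g : ℝ → ℝ)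
    (hF_top : Tendsto (fun z => F z) atTop (nhds 1)) (hg_zero : g 0 = 0)
    (hFhat : ∀ z : ℝ, Fhat z = if z < 0 then 0 else 1 - g (1 - F z) / g (1 - F 0))
    (hFhat_top : Tendsto (fun z => Fhat z) atTop (nhds 1)) {w : ℝ} (hw : 0 ≤ w)
    (h : F.measure (Ioi w) = 0) : Fhat.measure (Ioi w) = 0 := by
  rw [F.measure_Ioi hF_top, ENNReal.ofReal_eq_zero, sub_nonpos] at h
  have hFw : F w = 1 := le_antisymm (F.mono.ge_of_tendsto hF_top w) h
  rw [Fhat.measure_Ioi hFhat_top, hFhat, if_neg (not_lt.2 hw), hFw, sub_self, hg_zero, zero_div,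
    sub_zero, sub_self, ENNReal.ofReal_zero]

theorem stmt_6_general
    (F Fhat : StieltjesFunction ℝ) (g : ℝ → ℝ) (θ : ℝ)
    (hF_neg : ∀ z : ℝ, z < 0 → F z = 0)
    (hF_top : Tendsto (fun z => F z) atTop (nhds 1))
    (hg_zero : g 0 = 0)
    (hFhat : ∀ z : ℝ, Fhat z = if z < 0 then 0 else 1 - g (1 - F z) / g (1 - F 0))
    (hFhat_top : Tendsto (fun z => Fhat z) atTop (nhds 1))
    (prem : ℝ)
    (hEZ_lt : (∫⁻ z in Set.Ioi (0:ℝ), ENNReal.ofReal z ∂F.measure) < ENNReal.ofReal prem)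
    (hprem_lt : ENNReal.ofReal prem <
        ENNReal.ofReal (1 + θ) * ∫⁻ z in Set.Ioi (0:ℝ), ENNReal.ofReal z ∂Fhat.measure)
    (hfin : ENNReal.ofReal (1 + θ) *
        (∫⁻ z in Set.Ioi (0:ℝ), ENNReal.ofReal z ∂Fhat.measure) < ⊤)
    :
    ∃! a : ℝ, a ∈ Set.Ioi (0:ℝ) ∧
      vfun F.measure Fhat.measure θ a =
        ((prem - (ENNReal.ofReal (1 + θ) *
          (∫⁻ z in Set.Ioi (0:ℝ), ENNReal.ofReal z ∂Fhat.measure)).toReal : ℝ) : EReal) := by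
  have := F.isProbabilityMeasure_of_eq_zero hF_neg hF_top
  have := Fhat.isProbabilityMeasure_of_eq_zero (fun z hz => by rw [hFhat, if_pos hz]) hFhat_top
  set μ := F.measure
  set ν := Fhat.measure
  have hκ : ENNReal.ofReal (1 + θ) ≠ 0 := left_ne_zero_of_mul (zero_le.trans_lt hprem_lt).ne'
  have hθ : 0 < 1 + θ := ENNReal.ofReal_pos.1 (pos_of_ne_zero hκ)
  have hν : firstMoment ν ≠ ⊤ := (ENNReal.lt_top_of_mul_ne_top_right hfin.ne hκ).ne
  have hμ : firstMoment μ ≠ ⊤ := (hEZ_lt.trans ENNReal.ofReal_lt_top).ne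
  have hM : (ENNReal.ofReal (1 + θ) * ∫⁻ z in Ioi (0:ℝ), ENNReal.ofReal z ∂ν).toReal
      = (1 + θ) * (firstMoment ν).toReal := by
    rw [ENNReal.toReal_mul, ENNReal.toReal_ofReal hθ.le, firstMoment]
  have hπν := (ENNReal.ofReal_lt_iff_lt_toReal (ENNReal.ofReal_pos.1 (zero_le.trans_lt hEZ_lt)).le
    hfin.ne).1 hprem_lt
  rw [hM] at hπν ⊢
  refine (existsUnique_congr fun a => and_congr_right fun ha => ?_).1
    (existsUnique_vreal_eq (fun w hw => F.measure_Ioi_eq_zero_of_dual Fhat g hF_top hg_zero hFhat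
      hFhat_top hw) hμ hν hθ (ENNReal.toReal_lt_of_lt_ofReal hEZ_lt) hπν)
  rw [vfun_eq_coe_vreal hμ hν hθ.le ha, EReal.coe_eq_coe_iff]

/-- under the standing assumption there is a unique a* ∈ (0,∞) with
v(a*) = π − (1+θ)·∫_{(0,∞)} z dμ_F̂. -/
theorem stmt_6
    (F Fhat : StieltjesFunction ℝ) (g : ℝ → ℝ) (θ0 θ : ℝ)
    (hF_neg : ∀ z : ℝ, z < 0 → F z = 0)
    (hF_top : Tendsto (fun z => F z) atTop (nhds 1))
    (hg_mono : MonotoneOn g (Set.Icc 0 1))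
    (hg_left : ∀ p ∈ Set.Ioc (0:ℝ) 1, Tendsto g (nhdsWithin p (Set.Iio p)) (nhds (g p)))
    (hg_zero : g 0 = 0)
    (hg_zero' : Tendsto g (nhdsWithin 0 (Set.Ioi 0)) (nhds 0))
    (hg_one : g 1 = 1)
    (hg_pos : 0 < g (1 - F 0))
    (hθ0 : -1 < θ0)
    (hθ : θ = (1 + θ0) * g (1 - F 0) - 1)
    (hFhat : ∀ z : ℝ, Fhat z = if z < 0 then 0 else 1 - g (1 - F z) / g (1 - F 0))
    (hFhat_top : Tendsto (fun z => Fhat z) atTop (nhds 1))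
    (prem : ℝ) (hprem_pos : 0 < prem)
    (hEZ_pos : 0 < ∫⁻ z in Set.Ioi (0:ℝ), ENNReal.ofReal z ∂F.measure)
    (hEZ_lt : (∫⁻ z in Set.Ioi (0:ℝ), ENNReal.ofReal z ∂F.measure) < ENNReal.ofReal prem)
    (hprem_lt : ENNReal.ofReal prem <
        ENNReal.ofReal (1 + θ) * ∫⁻ z in Set.Ioi (0:ℝ), ENNReal.ofReal z ∂Fhat.measure)
    (hfin : ENNReal.ofReal (1 + θ) *
        (∫⁻ z in Set.Ioi (0:ℝ), ENNReal.ofReal z ∂Fhat.measure) < ⊤)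
    :
    ∃! a : ℝ, a ∈ Set.Ioi (0:ℝ) ∧
      vfun F.measure Fhat.measure θ a =
        ((prem - (ENNReal.ofReal (1 + θ) *
          (∫⁻ z in Set.Ioi (0:ℝ), ENNReal.ofReal z ∂Fhat.measure)).toReal : ℝ) : EReal) :=
  stmt_6_general F Fhat g θ hF_neg hF_top hg_zero hFhat hFhat_top prem hEZ_lt hprem_lt hfin
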